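/- Consider the incomplete pairwise comparison matrix on 5 alternatives whose comparison graph is the 5-cycle with edges {1,2},{2,3},{3,4},{4,5},{5,1} and whose values are 𝒜_12 = 2, 𝒜_23 = 3, 𝒜_34 = 2, 𝒜_45 = 5, 𝒜_51 = 7 (with reciprocal entries 𝒜_21 = 1/2, 𝒜_32 = 1/3, 𝒜_43 = 1/2, 𝒜_54 = 1/5, 𝒜_15 = 1/7, and all other comparisons missing). Then the maximum of σ over all feasible pairwise ordinal preference assignments equals ln 7 + ln 5 + ln 3 + ln 2 − ln 2 = ln 105, and this maximum is attained by at least two distinct feasible assignments: one in which x_21 = 1 (reversing the edge (1,2)) and one in which x_43 = 1 (reversing the edge (3,4)). In particular, Problem 1 for this instance (which has no ties, so τ ≡ 0) does not have a unique optimal solution. -/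

import Mathlib

/-!
Write `d_e = x_fwd - x_bwd ∈ {-1, 0, 1}` for the orientation of the edge `e` of the cycle
`0 → 1 → 2 → 3 → 4 → 0` and `w_e` for its weight, so that
`σ = Σ w_e d_e = ln 2 · Σ d_e + Σ (w_e - ln 2) d_e`. The relation `x i j = 1` is a strict partial
order, so four consecutive forward edges force the fifth one backwards; hence `Σ d_e ≤ 3` and
`σ ≤ 3 ln 2 + Σ (w_e - ln 2) = ln 105`. Equality holds for every linear order along the cycle that
reverses an edge of the least weight `ln 2`, and two edges have that weight.
-/
noncomputable section

/-- A feasible pairwise ordinal preference assignment. -/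
def Feasible {n : ℕ} (x : Fin n → Fin n → ℝ) : Prop :=
  (∀ i j : Fin n, i ≠ j → (x i j = 0 ∨ x i j = 1)) ∧
  (∀ i j : Fin n, i ≠ j → x i j + x j i ≤ 1) ∧
  (∀ i j k : Fin n, i ≠ j → j ≠ k → i ≠ k → x i k * x k j ≤ x i j)

/-- The weighted ordinal satisfaction index `σ` for the 5-cycle instance with
`𝒜_12 = 2, 𝒜_23 = 3, 𝒜_34 = 2, 𝒜_45 = 5, 𝒜_51 = 7` (vertices `v_1,…,v_5`
represented by `0,…,4 : Fin 5`), each unordered edge counted once. -/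
def sig5 (x : Fin 5 → Fin 5 → ℝ) : ℝ :=
  Real.log 2 * (x 0 1 - x 1 0) + Real.log 3 * (x 1 2 - x 2 1) +
    Real.log 2 * (x 2 3 - x 3 2) + Real.log 5 * (x 3 4 - x 4 3) +
    Real.log 7 * (x 4 0 - x 0 4)

open Real

variable {n : ℕ} {x : Fin n → Fin n → ℝ}

def StrictPref (x : Fin n → Fin n → ℝ) (i j : Fin n) : Prop := i ≠ j ∧ x i j = 1

namespace Feasible

lemma nonneg (hx : Feasible x) {i j : Fin n} (hij : i ≠ j) : 0 ≤ x i j := by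
  rcases hx.1 i j hij with h | h <;> simp [h]

lemma le_one (hx : Feasible x) {i j : Fin n} (hij : i ≠ j) : x i j ≤ 1 := by
  rcases hx.1 i j hij with h | h <;> simp [h]

lemma strictPref_trans (hx : Feasible x) {i j k : Fin n}
    (hij : StrictPref x i j) (hjk : StrictPref x j k) : StrictPref x i k := by
  have hik : i ≠ k := by
    rintro rfl
    have := hx.2.1 i j hij.1
    rw [hij.2, hjk.2] at this
    norm_num at this
  have htrans := hx.2.2 i k j hik hjk.1.symm hij.1
  rw [hij.2, hjk.2, one_mul] at htrans
  exact ⟨hik, (hx.1 i k hik).resolve_left (by linarith)⟩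

lemma strictPref_of_path (hx : Feasible x) {a b c d e : Fin n}
    (hab : StrictPref x a b) (hbc : StrictPref x b c) (hcd : StrictPref x c d)
    (hde : StrictPref x d e) : StrictPref x a e :=
  hx.strictPref_trans (hx.strictPref_trans (hx.strictPref_trans hab hbc) hcd) hde

lemma path_le (hx : Feasible x) {a b c d e : Fin n}
    (hab : a ≠ b) (hbc : b ≠ c) (hcd : c ≠ d) (hde : d ≠ e) (hae : a ≠ e) :
    x a b + x b c + x c d + x d e ≤ 3 + x a e := by
  have h1 := hx.le_one hab
  have h2 := hx.le_one hbc
  have h3 := hx.le_one hcd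
  have h4 := hx.le_one hde
  have h0 := hx.nonneg hae
  by_cases hpath : x a b = 1 ∧ x b c = 1 ∧ x c d = 1 ∧ x d e = 1
  · obtain ⟨p1, p2, p3, p4⟩ := hpath
    have := (hx.strictPref_of_path ⟨hab, p1⟩ ⟨hbc, p2⟩ ⟨hcd, p3⟩ ⟨hde, p4⟩).2
    linarith
  · simp only [not_and_or] at hpath
    rcases hpath with h | h | h | h
    · linarith [(hx.1 a b hab).resolve_right h]
    · linarith [(hx.1 b c hbc).resolve_right h]
    · linarith [(hx.1 c d hcd).resolve_right h]
    · linarith [(hx.1 d e hde).resolve_right h]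

lemma cycle5_net_le {x : Fin 5 → Fin 5 → ℝ} (hx : Feasible x) :
    (x 0 1 - x 1 0) + (x 1 2 - x 2 1) + (x 2 3 - x 3 2) + (x 3 4 - x 4 3) + (x 4 0 - x 0 4)
      ≤ 3 := by
  have p10 := hx.path_le (a := 1) (b := 2) (c := 3) (d := 4) (e := 0)
    (by decide) (by decide) (by decide) (by decide) (by decide)
  have p21 := hx.path_le (a := 2) (b := 3) (c := 4) (d := 0) (e := 1)
    (by decide) (by decide) (by decide) (by decide) (by decide)
  have p32 := hx.path_le (a := 3) (b := 4) (c := 0) (d := 1) (e := 2)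
    (by decide) (by decide) (by decide) (by decide) (by decide)
  have p43 := hx.path_le (a := 4) (b := 0) (c := 1) (d := 2) (e := 3)
    (by decide) (by decide) (by decide) (by decide) (by decide)
  have p04 := hx.path_le (a := 0) (b := 1) (c := 2) (d := 3) (e := 4)
    (by decide) (by decide) (by decide) (by decide) (by decide)
  rcases hx.1 0 1 (by decide) with h01 | h01 <;> rcases hx.1 1 2 (by decide) with h12 | h12 <;>
    rcases hx.1 2 3 (by decide) with h23 | h23 <;> rcases hx.1 3 4 (by decide) with h34 | h34 <;>
    rcases hx.1 4 0 (by decide) with h40 | h40 <;>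
    linarith [hx.2.1 0 1 (by decide), hx.2.1 1 2 (by decide), hx.2.1 2 3 (by decide),
      hx.2.1 3 4 (by decide), hx.2.1 4 0 (by decide), hx.nonneg (i := 1) (j := 0) (by decide),
      hx.nonneg (i := 2) (j := 1) (by decide), hx.nonneg (i := 3) (j := 2) (by decide),
      hx.nonneg (i := 4) (j := 3) (by decide), hx.nonneg (i := 0) (j := 4) (by decide)]

lemma sig5_le {x : Fin 5 → Fin 5 → ℝ} (hx : Feasible x) :
    sig5 x ≤ log 7 + log 5 + log 3 + log 2 - log 2 := by
  have hexcess : ∀ (w : ℝ) (i j : Fin 5), i ≠ j → 2 ≤ w →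
      (log w - log 2) * (x i j - x j i) ≤ log w - log 2 := fun w i j hij hw =>
    mul_le_of_le_one_right (sub_nonneg.2 (log_le_log (by norm_num) hw))
      (by linarith [hx.le_one hij, hx.nonneg hij.symm])
  have hnet := mul_le_mul_of_nonneg_left hx.cycle5_net_le (log_pos one_lt_two).le
  unfold sig5
  linarith [hexcess 3 1 2 (by decide) (by norm_num), hexcess 5 3 4 (by decide) (by norm_num),
    hexcess 7 4 0 (by decide) (by norm_num)]

end Feasible

def ofRank {α : Type*} [Preorder α] [DecidableLT α] (r : Fin n → α) (i j : Fin n) : ℝ :=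
  if r i < r j then 1 else 0

lemma feasible_ofRank {α : Type*} [Preorder α] [DecidableLT α] (r : Fin n → α) :
    Feasible (ofRank r) := by
  refine ⟨fun i j _ => ?_, fun i j _ => ?_, fun i j k _ _ _ => ?_⟩
  · unfold ofRank; split_ifs <;> simp
  · unfold ofRank
    split_ifs with hij hji
    · exact absurd hij hji.not_gt
    all_goals norm_num
  · unfold ofRank
    split_ifs with hik hkj hij <;> try norm_num
    exact hij (hik.trans hkj)

lemma log_105 : log 105 = log 3 + log 5 + log 7 := by
  rw [show (105 : ℝ) = 3 * 5 * 7 by norm_num, log_mul (by norm_num) (by norm_num),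
    log_mul (by norm_num) (by norm_num)]

/-- **An ambiguous cycle with multiple optimal solutions.**
For the 5-cycle instance above (no ties, so `τ ≡ 0`), the maximum of `σ` over all
feasible pairwise ordinal preference assignments equals
`ln 7 + ln 5 + ln 3 + ln 2 − ln 2 = ln 105`, and it is attained by (at least) two
distinct feasible assignments: one with `x_21 = 1` (reversing the edge `(v_1,v_2)`)
and one with `x_43 = 1` (reversing the edge `(v_3,v_4)`). In particular Problem 1
does not have a unique optimal solution for this instance. -/
theorem ambiguous_cycle_nonunique_optimum :
    (∀ x : Fin 5 → Fin 5 → ℝ, Feasible x →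
      sig5 x ≤ Real.log 7 + Real.log 5 + Real.log 3 + Real.log 2 - Real.log 2) ∧
    Real.log 7 + Real.log 5 + Real.log 3 + Real.log 2 - Real.log 2
      = Real.log 105 ∧
    (∃ x y : Fin 5 → Fin 5 → ℝ, Feasible x ∧ Feasible y ∧
      sig5 x = Real.log 105 ∧ sig5 y = Real.log 105 ∧
      x 1 0 = 1 ∧ y 3 2 = 1 ∧ ∃ i j : Fin 5, i ≠ j ∧ x i j ≠ y i j) := by
  -- `x` ranks the alternatives `1, 2, 3, 4, 0`, `y` ranks them `3, 4, 0, 1, 2`.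
  refine ⟨fun x hx => hx.sig5_le, by rw [log_105]; ring,
    ofRank ![4, 0, 1, 2, 3], ofRank ![2, 3, 4, 0, 1], feasible_ofRank _, feasible_ofRank _,
    ?_, ?_, ?_, ?_, 2, 3, by decide, ?_⟩
  all_goals simp only [sig5, ofRank, Matrix.cons_val]
  all_goals norm_num [log_105]
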